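/- Let k ≥ 1, n ≥ k+1, and let Z be any real n×(k+1) matrix of rank k+1. Then the open rational Grasstope of Z, i.e., the set of points [π(AZ)] ∈ ℝP^k as A ranges over all totally positive k×n matrices with AZ of rank k, is an open subset of ℝP^k. -/

import Mathlib

open Matrix

/-- The minor of a real `k × n` matrix on a set `S` of `k` columns. -/
noncomputable def minorCols {k n : ℕ} (A : Matrix (Fin k) (Fin n) ℝ)
    (S : Finset (Fin n)) (hS : S.card = k) : ℝ :=
  (A.submatrix id (fun i => ((S.orderIsoOfFin hS) i : Fin n))).det

/-- The minor of a real `n × k` matrix on a set `S` of `k` rows. -/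
noncomputable def minorRows {k n : ℕ} (B : Matrix (Fin n) (Fin k) ℝ)
    (S : Finset (Fin n)) (hS : S.card = k) : ℝ :=
  (B.submatrix (fun i => ((S.orderIsoOfFin hS) i : Fin n)) id).det

/-- A real `k × n` matrix is totally nonnegative if all its maximal (`k × k`) minors
are nonnegative. -/
def IsTotallyNonneg {k n : ℕ} (A : Matrix (Fin k) (Fin n) ℝ) : Prop :=
  ∀ (S : Finset (Fin n)) (hS : S.card = k), 0 ≤ minorCols A S hS

/-- A real `k × n` matrix is totally positive if all its maximal (`k × k`) minors
are strictly positive. -/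
def IsTotallyPos {k n : ℕ} (A : Matrix (Fin k) (Fin n) ℝ) : Prop :=
  ∀ (S : Finset (Fin n)) (hS : S.card = k), 0 < minorCols A S hS

/-- `π(B)`: the signed vector of maximal minors of a `k × (k+1)` matrix,
`π(B)_j = (-1)^j · det(B with column j deleted)` (`j` zero-indexed). -/
noncomputable def piVec {k : ℕ} (B : Matrix (Fin k) (Fin (k + 1)) ℝ) : Fin (k + 1) → ℝ :=
  fun j => (-1 : ℝ) ^ (j : ℕ) * (B.submatrix id j.succAbove).det

/-- The open rational Grasstope of `Z`: the set of points `[π(A*Z)] ∈ ℝP^k` as `A` ranges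
over totally positive `k × n` matrices with `A * Z` of rank `k`. -/
noncomputable def openGrasstope1 {n k : ℕ} (Z : Matrix (Fin n) (Fin (k + 1)) ℝ) :
    Set (Projectivization ℝ (Fin (k + 1) → ℝ)) :=
  {P | ∃ (A : Matrix (Fin k) (Fin n) ℝ) (h : piVec (A * Z) ≠ 0),
    IsTotallyPos A ∧ (A * Z).rank = k ∧
    P = Projectivization.mk ℝ (piVec (A * Z)) h}

/-- The quotient topology on a projectivization. -/
noncomputable instance {K V : Type*} [DivisionRing K] [AddCommGroup V] [Module K V]
    [TopologicalSpace V] : TopologicalSpace (Projectivization K V) :=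
  inferInstanceAs (TopologicalSpace (Quotient _))

/-!
Right multiplication by `Z` has the continuous right inverses `B ↦ A₀ + (B - A₀ Z) Y`, where
`Y Z = 1`, so it is an open map and `O = {A Z | A totally positive}` is open. The map `π` has
continuous local sections: keeping all columns of `B₀` but the `j`-th and solving `B π(B) = 0` for
that column by Cramer's rule gives matrices near `B₀` whose `π` is proportional to any prescribed
`u` with `u j ≠ 0`. Hence the nonzero part of the cone `ℝ · π(O)` is open, and it is the preimage
of the Grasstope in `ℝ^(k+1) \ {0}`.
-/

open Topology

lemma exists_mul_eq_one_of_rank_eq_card {m n K : Type*} [Field K] [Fintype m] [Fintype n]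
    [DecidableEq m] [DecidableEq n] (Z : Matrix m n K) (hZ : Z.rank = Fintype.card n) :
    ∃ Y : Matrix n m K, Y * Z = 1 := by
  have hker : LinearMap.ker Z.mulVecLin = ⊥ := by
    have := LinearMap.finrank_range_add_finrank_ker Z.mulVecLin
    rw [← Matrix.rank, hZ, Module.finrank_fintype_fun_eq_card] at this
    exact Submodule.finrank_eq_zero.mp (by omega)
  obtain ⟨g, hg⟩ := Z.mulVecLin.exists_leftInverse_of_injective hker
  refine ⟨LinearMap.toMatrix' g, ?_⟩
  rw [← LinearMap.toMatrix'_toLin' Z, ← LinearMap.toMatrix'_comp, Matrix.toLin'_apply', hg,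
    LinearMap.toMatrix'_id]

lemma isOpenMap_mul_right_of_mul_eq_one {R m n l : Type*} [Ring R] [TopologicalSpace R]
    [IsTopologicalRing R] [Fintype n] [Fintype l] [DecidableEq l] {Z : Matrix n l R}
    {Y : Matrix l n R} (hYZ : Y * Z = 1) : IsOpenMap fun A : Matrix m n R => A * Z := by
  refine IsOpenMap.of_sections fun A => ⟨fun B => A + (B - A * Z) * Y, ?_, by simp, ?_⟩
  · exact (continuous_const.add ((continuous_id.sub continuous_const).matrix_mul
      continuous_const)).continuousAt
  · intro B
    simp [Matrix.add_mul, Matrix.mul_assoc, hYZ, Matrix.mul_one]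

lemma isOpen_setOf_isTotallyPos {k n : ℕ} :
    IsOpen {A : Matrix (Fin k) (Fin n) ℝ | IsTotallyPos A} := by
  simp only [IsTotallyPos, Set.ofPred_forall]
  exact isOpen_iInter_of_finite fun S => isOpen_iInter_of_finite fun hS =>
    isOpen_lt continuous_const (continuous_id.matrix_submatrix _ _).matrix_det

def insertCol {R : Type*} {k : ℕ} (j : Fin (k + 1)) (c : Fin k → R)
    (M : Matrix (Fin k) (Fin k) R) : Matrix (Fin k) (Fin (k + 1)) R :=
  of fun i => j.insertNth (c i) (M i)

section insertCol

variable {R : Type*} {k : ℕ} (j : Fin (k + 1))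

@[simp]
lemma insertCol_submatrix_succAbove (c : Fin k → R) (M : Matrix (Fin k) (Fin k) R) :
    (insertCol j c M).submatrix id j.succAbove = M := by
  ext i l
  simp [insertCol]

lemma insertCol_col_submatrix (B : Matrix (Fin k) (Fin (k + 1)) R) :
    insertCol j (fun i => B i j) (B.submatrix id j.succAbove) = B := by
  ext i l
  cases l using j.succAboveCases <;> simp [insertCol]

lemma insertCol_mulVec [NonUnitalNonAssocCommSemiring R] (c : Fin k → R)
    (M : Matrix (Fin k) (Fin k) R) (x : Fin (k + 1) → R) :
    insertCol j c M *ᵥ x = x j • c + M *ᵥ (x ∘ j.succAbove) := by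
  ext i
  simp [mulVec, dotProduct, Fin.sum_univ_succAbove _ j, insertCol, mul_comm]

lemma continuous_insertCol [TopologicalSpace R] (M : Matrix (Fin k) (Fin k) R) :
    Continuous fun c : Fin k → R => insertCol j c M := by
  refine continuous_pi fun i => continuous_pi fun l => ?_
  cases l using j.succAboveCases <;> simp only [insertCol, of_apply, Fin.insertNth_apply_same,
    Fin.insertNth_apply_succAbove] <;> fun_prop

end insertCol

lemma mulVec_piVec {k : ℕ} (B : Matrix (Fin k) (Fin (k + 1)) ℝ) : B *ᵥ piVec B = 0 := by
  ext i
  have hdet : (of (vecCons (B i) B)).det = 0 :=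
    det_zero_of_row_eq (Fin.succ_ne_zero i).symm rfl
  rw [det_succ_row_zero] at hdet
  refine (Finset.sum_congr rfl fun j _ => ?_).trans hdet
  simp only [piVec]
  exact (mul_left_comm _ _ _).trans (mul_assoc _ _ _).symm

lemma piVec_insertCol_self {k : ℕ} (j : Fin (k + 1)) (c : Fin k → ℝ)
    (M : Matrix (Fin k) (Fin k) ℝ) : piVec (insertCol j c M) j = (-1) ^ (j : ℕ) * M.det := by
  simp [piVec]

lemma rank_eq_of_piVec_ne_zero {k : ℕ} {B : Matrix (Fin k) (Fin (k + 1)) ℝ}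
    (h : piVec B ≠ 0) : B.rank = k := by
  obtain ⟨j, hj⟩ := Function.ne_iff.mp h
  have hdet : (B.submatrix id j.succAbove).det ≠ 0 := by
    simpa [piVec] using hj
  refine le_antisymm (B.rank_le_card_height.trans_eq (Fintype.card_fin k)) ?_
  calc k = (B.submatrix id j.succAbove).rank := by
        rw [rank_of_isUnit _ ((isUnit_iff_isUnit_det _).mpr hdet.isUnit), Fintype.card_fin]
    _ ≤ B.rank := rank_submatrix_le B id j.succAbove

/-- Cramer's rule applied to `B *ᵥ π(B) = 0`: keeping the columns `M`, this choice of the `j`-th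
column makes `π(B)` proportional to `u`. -/
noncomputable def piVecSection {k : ℕ} (j : Fin (k + 1)) (M : Matrix (Fin k) (Fin k) ℝ)
    (u : Fin (k + 1) → ℝ) : Matrix (Fin k) (Fin (k + 1)) ℝ :=
  insertCol j (-(u j)⁻¹ • M *ᵥ (u ∘ j.succAbove)) M

section piVecSection

variable {k : ℕ} (j : Fin (k + 1))

lemma piVec_piVecSection {M : Matrix (Fin k) (Fin k) ℝ} (hM : M.det ≠ 0)
    {u : Fin (k + 1) → ℝ} (hu : u j ≠ 0) :
    piVec (piVecSection j M u) = ((-1) ^ (j : ℕ) * M.det / u j) • u := by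
  set c := -(u j)⁻¹ • M *ᵥ (u ∘ j.succAbove)
  set B := piVecSection j M u
  set d := (-1) ^ (j : ℕ) * M.det
  have hBj : piVec B j = d := piVec_insertCol_self j c M
  have hB : insertCol j c M *ᵥ piVec B = 0 := mulVec_piVec B
  rw [insertCol_mulVec, hBj] at hB
  have hrest : piVec B ∘ j.succAbove = (d / u j) • (u ∘ j.succAbove) := by
    refine mulVec_injective_iff_isUnit.mpr ((isUnit_iff_isUnit_det _).mpr hM.isUnit) ?_
    rw [mulVec_smul]
    linear_combination (norm := module) hB
  ext l
  cases l using j.succAboveCases with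
  | x => simp [hBj, d, hu]
  | p l => simpa using congrFun hrest l

lemma piVecSection_smul_piVec {B : Matrix (Fin k) (Fin (k + 1)) ℝ} (hB : piVec B j ≠ 0)
    {a : ℝ} (ha : a ≠ 0) : piVecSection j (B.submatrix id j.succAbove) (a • piVec B) = B := by
  set M := B.submatrix id j.succAbove
  have hBπ := mulVec_piVec B
  nth_rw 1 [← insertCol_col_submatrix j B, insertCol_mulVec] at hBπ
  conv_rhs => rw [← insertCol_col_submatrix j B]
  refine congrArg (insertCol j · M) (funext fun i => ?_)
  have hBi : piVec B j * B i j + (M *ᵥ (piVec B ∘ j.succAbove)) i = 0 := congrFun hBπ i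
  have hcomp : (a • piVec B) ∘ j.succAbove = a • (piVec B ∘ j.succAbove) := rfl
  simp only [hcomp, mulVec_smul, Pi.smul_apply, smul_eq_mul]
  field_simp
  linear_combination -hBi

lemma continuousAt_piVecSection (M : Matrix (Fin k) (Fin k) ℝ) {u : Fin (k + 1) → ℝ}
    (hu : u j ≠ 0) : ContinuousAt (piVecSection j M) u :=
  (continuous_insertCol j M).continuousAt.comp <|
    ((continuous_apply j).continuousAt.inv₀ hu).neg.smul
      (continuous_const.matrix_mulVec (by fun_prop)).continuousAt

end piVecSection

def piVecCone {k : ℕ} (O : Set (Matrix (Fin k) (Fin (k + 1)) ℝ)) : Set (Fin (k + 1) → ℝ) :=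
  {x | x ≠ 0 ∧ ∃ B ∈ O, ∃ a : ℝ, a • piVec B = x}

lemma isOpen_piVecCone {k : ℕ} {O : Set (Matrix (Fin k) (Fin (k + 1)) ℝ)} (hO : IsOpen O) :
    IsOpen (piVecCone O) := by
  rw [isOpen_iff_mem_nhds]
  rintro x ⟨hx, B₀, hB₀, a, rfl⟩
  obtain ⟨j, hj⟩ : ∃ j, a * piVec B₀ j ≠ 0 := Function.ne_iff.mp hx
  set M := B₀.submatrix id j.succAbove
  have hM : M.det ≠ 0 := fun h => hj (by simp [piVec, M, h])
  have hσ : piVecSection j M (a • piVec B₀) = B₀ :=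
    piVecSection_smul_piVec j (right_ne_zero_of_mul hj) (left_ne_zero_of_mul hj)
  have hne : ∀ᶠ u in 𝓝 (a • piVec B₀), u j ≠ 0 :=
    (continuous_apply j).continuousAt.eventually_ne hj
  filter_upwards [(continuousAt_piVecSection j M hj).preimage_mem_nhds
    (hO.mem_nhds (by rwa [hσ])), hne] with u hσu hu
  refine ⟨fun h => hu (by simp [h]), _, hσu, u j / ((-1) ^ (j : ℕ) * M.det), ?_⟩
  rw [piVec_piVecSection j hM hu, smul_smul]
  field_simp
  exact one_smul ℝ u

lemma isOpen_iff_isOpen_preimage_mk' {K V : Type*} [DivisionRing K] [AddCommGroup V] [Module K V]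
    [TopologicalSpace V] {S : Set (Projectivization K V)} :
    IsOpen S ↔ IsOpen (Projectivization.mk' K ⁻¹' S) :=
  Iff.rfl

lemma preimage_mk'_openGrasstope1 {n k : ℕ} (Z : Matrix (Fin n) (Fin (k + 1)) ℝ) :
    Projectivization.mk' ℝ ⁻¹' openGrasstope1 Z
      = Subtype.val ⁻¹'
          piVecCone ((fun A : Matrix (Fin k) (Fin n) ℝ => A * Z) '' {A | IsTotallyPos A}) := by
  ext ⟨x, hx⟩
  change Projectivization.mk ℝ x hx ∈ openGrasstope1 Z ↔ x ∈ piVecCone _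
  constructor
  · rintro ⟨A, hπ, hA, -, hxA⟩
    obtain ⟨a, ha⟩ := (Projectivization.mk_eq_mk_iff' ℝ _ _ hx hπ).mp hxA
    exact ⟨hx, A * Z, ⟨A, hA, rfl⟩, a, ha⟩
  · rintro ⟨-, -, ⟨A, hA, rfl⟩, a, ha⟩
    have hπ : piVec (A * Z) ≠ 0 := by
      rintro h
      rw [h, smul_zero] at ha
      exact hx ha.symm
    exact ⟨A, hπ, hA, rank_eq_of_piVec_ne_zero hπ,
      (Projectivization.mk_eq_mk_iff' ℝ _ _ hx hπ).mpr ⟨a, ha⟩⟩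

theorem stmt10_general (k n : ℕ)
    (Z : Matrix (Fin n) (Fin (k + 1)) ℝ) (hZ : Z.rank = k + 1) :
    IsOpen (openGrasstope1 Z) := by
  obtain ⟨Y, hYZ⟩ := exists_mul_eq_one_of_rank_eq_card Z (by rwa [Fintype.card_fin])
  have hO : IsOpen ((fun A : Matrix (Fin k) (Fin n) ℝ => A * Z) '' {A | IsTotallyPos A}) :=
    isOpenMap_mul_right_of_mul_eq_one hYZ _ isOpen_setOf_isTotallyPos
  rw [isOpen_iff_isOpen_preimage_mk', preimage_mk'_openGrasstope1]
  exact (isOpen_piVecCone hO).preimage continuous_subtype_val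

/-- The open rational Grasstope of `Z` is an open subset of `ℝP^k`. -/
theorem stmt10 (k n : ℕ) (hk : 1 ≤ k) (hn : k + 1 ≤ n)
    (Z : Matrix (Fin n) (Fin (k + 1)) ℝ) (hZ : Z.rank = k + 1) :
    IsOpen (openGrasstope1 Z) :=
  stmt10_general k n Z hZ
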